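/- arXiv:1001.2821 — 4 statements merged into one kernel-verified Lean document; each statement's English description precedes it below -/
import Mathlib

section
/- Let ψ : [0,∞] → [0,∞] be a sense-reversing homeomorphism and φ : [0,∞] → [0,∞] a non-decreasing function. Then the generalized inverse of the composite satisfies (φ∘ψ)⁻¹(τ) ≤ ψ⁻¹(φ⁻¹(τ)) for all τ ∈ [0,∞]. -/
open ENNReal

/-- Generalized inverse of a non-decreasing function: `g⁻¹(τ) = inf { t : g(t) ≥ τ }`. -/
noncomputable def incInv (g : ℝ≥0∞ → ℝ≥0∞) (τ : ℝ≥0∞) : ℝ≥0∞ :=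
  sInf {t | τ ≤ g t}

/-- Generalized inverse of a non-increasing function: `h⁻¹(τ) = inf { t : h(t) ≤ τ }`. -/
noncomputable def decInv (h : ℝ≥0∞ → ℝ≥0∞) (τ : ℝ≥0∞) : ℝ≥0∞ :=
  sInf {t | h t ≤ τ}

theorem apply_lt_of_lt_incInv {g : ℝ≥0∞ → ℝ≥0∞} {τ s : ℝ≥0∞} (hs : s < incInv g τ) :
    g s < τ :=
  lt_of_not_ge fun h => (sInf_le h : incInv g τ ≤ s).not_gt hs

theorem decInv_le {h : ℝ≥0∞ → ℝ≥0∞} {τ t : ℝ≥0∞} (ht : h t ≤ τ) : decInv h τ ≤ t :=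
  sInf_le ht

theorem stmt2_general (ψ ψinv φ : ℝ≥0∞ → ℝ≥0∞)
    (hψ : StrictAnti ψ)
    (hright : Function.RightInverse ψinv ψ)
    (τ : ℝ≥0∞) :
    decInv (fun t => φ (ψ t)) τ ≤ ψinv (incInv φ τ) := by
  refine le_of_forall_gt_imp_ge_of_dense fun b hb => decInv_le ?_
  -- Strictness matters here: an antitone `ψ` flat at the value `incInv φ τ` would only give `≤`.
  have hψb : ψ b < incInv φ τ := hright (incInv φ τ) ▸ hψ hb
  exact (apply_lt_of_lt_incInv hψb).le

/-- Let `ψ : [0,∞] → [0,∞]` be a sense-reversing homeomorphism (order-reversing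
bijection with inverse `ψinv`) and `φ` a non-decreasing function.  Then `φ ∘ ψ` is
non-increasing and its generalized inverse satisfies
`(φ∘ψ)⁻¹(τ) ≤ ψ⁻¹(φ⁻¹(τ))` for all `τ`. -/
theorem stmt2 (ψ ψinv φ : ℝ≥0∞ → ℝ≥0∞)
    (hψ : StrictAnti ψ) (hψbij : Function.Bijective ψ)
    (hψc : Continuous ψ) (hψinvc : Continuous ψinv)
    (hleft : Function.LeftInverse ψinv ψ) (hright : Function.RightInverse ψinv ψ)
    (hφ : Monotone φ) (τ : ℝ≥0∞) :
    decInv (fun t => φ (ψ t)) τ ≤ ψinv (incInv φ τ) :=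
  stmt2_general ψ ψinv φ hψ hright τ
end

section
/- Let φ : [0,∞] → [0,∞] be a strictly monotone function and ψ : [0,∞] → [0,∞] a sense-reversing homeomorphism. Then the generalized inverse of φ∘ψ equals ψ⁻¹ ∘ φ⁻¹ everywhere on [0,∞]. -/
open ENNReal

/-! The generalized inverse of `φ ∘ ψ` is the infimum of `ψ ⁻¹' S`, where `S` is a sublevel
(or superlevel) set of `φ`. Since `ψ` is an order-reversing bijection, this infimum is
`ψ⁻¹ (sSup S)`. For strictly monotone `φ` on the densely ordered `[0,∞]`, the sublevel set
`{φ ≤ τ}` and the superlevel set `{τ ≤ φ}` cover the line and lie one below the other, so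
`sSup {φ ≤ τ} = sInf {τ ≤ φ} = φ⁻¹ τ` (and symmetrically for strictly decreasing `φ`). -/

section

variable {α β : Type*}

theorem StrictAnti.sInf_preimage_eq_of_rightInverse [CompleteLinearOrder α] [CompleteLattice β]
    {ψ : α → β} {ψinv : β → α} (hψ : StrictAnti ψ) (hright : Function.RightInverse ψinv ψ)
    (C : Set β) : sInf (ψ ⁻¹' C) = ψinv (sSup C) :=
  ((hψ.dual_right.orderIsoOfRightInverse _ ψinv hright).symm.map_sInf_eq_sInf_symm_preimage C).symm

variable [CompleteLinearOrder α] [DenselyOrdered α] [LinearOrder β]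

theorem StrictMono.sSup_setOf_le_eq_sInf_setOf_ge {φ : α → β} (hφ : StrictMono φ) (τ : β) :
    sSup {x | φ x ≤ τ} = sInf {x | τ ≤ φ x} := by
  refine le_antisymm (sSup_le fun a ha => le_sInf fun b hb => hφ.le_iff_le.mp (ha.trans hb)) ?_
  refine le_of_forall_gt_imp_ge_of_dense fun x hx => sInf_le ?_
  exact le_of_not_ge fun hxτ => (le_sSup (show x ∈ {x | φ x ≤ τ} from hxτ)).not_gt hx

theorem StrictAnti.sSup_setOf_ge_eq_sInf_setOf_le {φ : α → β} (hφ : StrictAnti φ) (τ : β) :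
    sSup {x | τ ≤ φ x} = sInf {x | φ x ≤ τ} :=
  hφ.dual_right.sSup_setOf_le_eq_sInf_setOf_ge (OrderDual.toDual τ)

end

theorem stmt3_general (ψ ψinv φ : ℝ≥0∞ → ℝ≥0∞)
    (hψ : StrictAnti ψ)
    (hright : Function.RightInverse ψinv ψ) :
    (StrictMono φ → ∀ τ : ℝ≥0∞, decInv (fun t => φ (ψ t)) τ = ψinv (incInv φ τ)) ∧
    (StrictAnti φ → ∀ τ : ℝ≥0∞, incInv (fun t => φ (ψ t)) τ = ψinv (decInv φ τ)) := by
  refine ⟨fun hφ τ => ?_, fun hφ τ => ?_⟩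
  · calc decInv (fun t => φ (ψ t)) τ = sInf (ψ ⁻¹' {s | φ s ≤ τ}) := rfl
      _ = ψinv (sSup {s | φ s ≤ τ}) := hψ.sInf_preimage_eq_of_rightInverse hright _
      _ = ψinv (incInv φ τ) := congrArg ψinv (hφ.sSup_setOf_le_eq_sInf_setOf_ge τ)
  · calc incInv (fun t => φ (ψ t)) τ = sInf (ψ ⁻¹' {s | τ ≤ φ s}) := rfl
      _ = ψinv (sSup {s | τ ≤ φ s}) := hψ.sInf_preimage_eq_of_rightInverse hright _
      _ = ψinv (decInv φ τ) := congrArg ψinv (hφ.sSup_setOf_ge_eq_sInf_setOf_le τ)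

/-- Let `φ : [0,∞] → [0,∞]` be strictly monotone and `ψ` a sense-reversing
homeomorphism (order-reversing bijection with inverse `ψinv`).  Then the generalized
inverse of `φ ∘ ψ` equals `ψ⁻¹ ∘ φ⁻¹` everywhere on `[0,∞]`.  (If `φ` is strictly
increasing then `φ∘ψ` is non-increasing and `φ⁻¹` is the increasing-type inverse;
if `φ` is strictly decreasing then `φ∘ψ` is non-decreasing and `φ⁻¹` is the
decreasing-type inverse.) -/
theorem stmt3 (ψ ψinv φ : ℝ≥0∞ → ℝ≥0∞)
    (hψ : StrictAnti ψ) (hψbij : Function.Bijective ψ)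
    (hψc : Continuous ψ) (hψinvc : Continuous ψinv)
    (hleft : Function.LeftInverse ψinv ψ) (hright : Function.RightInverse ψinv ψ)
    (hφ : StrictMono φ ∨ StrictAnti φ) :
    (StrictMono φ → ∀ τ : ℝ≥0∞, decInv (fun t => φ (ψ t)) τ = ψinv (incInv φ τ)) ∧
    (StrictAnti φ → ∀ τ : ℝ≥0∞, incInv (fun t => φ (ψ t)) τ = ψinv (decInv φ τ)) :=
  stmt3_general ψ ψinv φ hψ hright
end

section
/- Let Φ : [1,∞) → [1,∞) be a locally integrable function with ∫₁^∞ log Φ(t) dt/t² = ∞. Then limsup_{t→∞} Φ(t)/t^λ = ∞ for every real λ. -/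
/-!
If `Φ(t) ≤ c t^λ` for large `t`, then `log Φ(t) ≤ log c + λ log t = O(√t)`, so
`log Φ(t)/t² = O(t^{-3/2})` is integrable at infinity. On a bounded interval `[1, A]` the
integrand is at most `Φ`, which is integrable there. Hence `∫₁^∞ log Φ(t) dt/t²` would be finite.
-/

open ENNReal MeasureTheory Set Filter Real

lemma ofReal_log_div_sq_le_enorm (x : ℝ) {t : ℝ} (ht : 1 ≤ t) :
    ENNReal.ofReal (log x / t ^ 2) ≤ ‖x‖ₑ := by
  rw [Real.enorm_eq_ofReal_abs]
  refine ENNReal.ofReal_le_ofReal ?_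
  rcases le_total (log x) 0 with hlog | hlog
  · exact (div_nonpos_of_nonpos_of_nonneg hlog (by positivity)).trans (abs_nonneg x)
  · calc log x / t ^ 2 ≤ log x := div_le_self hlog (one_le_pow₀ ht)
      _ = log |x| := (log_abs x).symm
      _ ≤ |x| := log_le_self (abs_nonneg x)

lemma setLIntegral_ofReal_log_div_sq_lt_top {Φ : ℝ → ℝ} {s : Set ℝ} (hs : s ⊆ Ici 1)
    (hΦ : IntegrableOn Φ s) : ∫⁻ t in s, ENNReal.ofReal (log (Φ t) / t ^ 2) < ∞ :=
  calc ∫⁻ t in s, ENNReal.ofReal (log (Φ t) / t ^ 2) ≤ ∫⁻ t in s, ‖Φ t‖ₑ :=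
        setLIntegral_mono_ae hΦ.aestronglyMeasurable.enorm
          (ae_of_all _ fun t ht ↦ ofReal_log_div_sq_le_enorm (Φ t) (hs ht))
    _ < ∞ := hΦ.hasFiniteIntegral

lemma log_mul_rpow_le_mul_sqrt {c t : ℝ} (lam : ℝ) (hc : 0 < c) (ht : 1 ≤ t) :
    log (c * t ^ lam) ≤ (|log c| + 2 * |lam|) * t ^ (1 / 2 : ℝ) := by
  have ht₀ : 0 < t := one_pos.trans_le ht
  rw [log_mul hc.ne' (rpow_pos_of_pos ht₀ lam).ne', log_rpow ht₀]
  have hsqrt : 1 ≤ t ^ (1 / 2 : ℝ) := one_le_rpow ht (by norm_num)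
  have hlog : log t ≤ 2 * t ^ (1 / 2 : ℝ) := by
    have := log_le_rpow_div ht₀.le (ε := 1 / 2) (by norm_num)
    linarith
  nlinarith [le_abs_self (log c), abs_nonneg (log c), abs_nonneg lam,
    mul_le_mul_of_nonneg_right (le_abs_self lam) (log_nonneg ht),
    mul_le_mul_of_nonneg_left hlog (abs_nonneg lam)]

lemma setLIntegral_Ioi_ofReal_log_div_sq_lt_top {Φ : ℝ → ℝ} {A c lam : ℝ} (hA : 1 ≤ A)
    (hΦ : ∀ t > A, 0 < Φ t ∧ Φ t ≤ c * t ^ lam) :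
    ∫⁻ t in Ioi A, ENNReal.ofReal (log (Φ t) / t ^ 2) < ∞ := by
  have hc : 0 < c := by
    obtain ⟨hpos, hle⟩ := hΦ (A + 1) (by linarith)
    exact pos_of_mul_pos_left (hpos.trans_le hle) (by positivity)
  set K := |log c| + 2 * |lam|
  have hdom : ∀ t ∈ Ioi A,
      ENNReal.ofReal (log (Φ t) / t ^ 2) ≤ ‖K * t ^ (-(3 / 2) : ℝ)‖ₑ := by
    intro t ht
    have ht₁ : 1 ≤ t := hA.trans (le_of_lt ht)
    have ht₀ : 0 < t := one_pos.trans_le ht₁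
    obtain ⟨hpos, hle⟩ := hΦ t ht
    rw [Real.enorm_eq_ofReal_abs]
    refine ENNReal.ofReal_le_ofReal (le_trans ?_ (le_abs_self _))
    calc log (Φ t) / t ^ 2 ≤ K * t ^ (1 / 2 : ℝ) / t ^ 2 := by
          gcongr
          exact (log_le_log hpos hle).trans (log_mul_rpow_le_mul_sqrt lam hc ht₁)
      _ = K * t ^ (-(3 / 2) : ℝ) := by
          rw [mul_div_assoc, ← Nat.cast_ofNat, ← rpow_sub_natCast ht₀.ne']
          norm_num
  have hint : IntegrableOn (fun t : ℝ ↦ K * t ^ (-(3 / 2) : ℝ)) (Ioi A) :=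
    (integrableOn_Ioi_rpow_of_lt (by norm_num) (by linarith)).const_mul K
  calc ∫⁻ t in Ioi A, ENNReal.ofReal (log (Φ t) / t ^ 2)
        ≤ ∫⁻ t in Ioi A, ‖K * t ^ (-(3 / 2) : ℝ)‖ₑ :=
          setLIntegral_mono (by fun_prop) hdom
    _ < ∞ := hint.hasFiniteIntegral

/-- Let `Φ : [1,∞) → [1,∞)` be locally integrable with
`∫₁^∞ log Φ(t) dt/t² = ∞`.  Then `limsup_{t→∞} Φ(t)/t^λ = ∞` for every real `λ`
(expressed as: for every `λ` and every constant `c`, `Φ(t)/t^λ > c` frequently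
as `t → ∞`). -/
theorem stmt13 (Φ : ℝ → ℝ) (hΦ1 : ∀ t ≥ 1, 1 ≤ Φ t)
    (hloc : LocallyIntegrableOn Φ (Ici 1))
    (hdiv : ∫⁻ t in Ioi (1:ℝ), ENNReal.ofReal (Real.log (Φ t) / t ^ 2) = ∞) :
    ∀ lam c : ℝ, ∃ᶠ t in atTop, c < Φ t / t ^ lam := by
  intro lam c
  by_contra hbdd
  obtain ⟨A₀, hA₀⟩ := eventually_atTop.mp (not_frequently.mp hbdd)
  set A := max A₀ 1
  have hA : 1 ≤ A := le_max_right _ _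
  have htail : ∀ t > A, 0 < Φ t ∧ Φ t ≤ c * t ^ lam := fun t ht ↦ by
    have ht₁ : 1 ≤ t := hA.trans (le_of_lt ht)
    refine ⟨one_pos.trans_le (hΦ1 t ht₁), ?_⟩
    rw [← div_le_iff₀ (by positivity)]
    exact not_lt.mp (hA₀ t ((le_max_left _ _).trans (le_of_lt ht)))
  have hhead : IntegrableOn Φ (Ioc 1 A) :=
    (hloc.integrableOn_compact_subset Icc_subset_Ici_self isCompact_Icc).mono_set
      Ioc_subset_Icc_self
  rw [← Ioc_union_Ioi_eq_Ioi hA] at hdiv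
  refine (lintegral_union_le _ _ _).trans_lt ?_ |>.ne hdiv
  exact ENNReal.add_lt_top.mpr
    ⟨setLIntegral_ofReal_log_div_sq_lt_top (Ioc_subset_Icc_self.trans Icc_subset_Ici_self) hhead,
      setLIntegral_Ioi_ofReal_log_div_sq_lt_top hA htail⟩
end

section
/- There exists a continuous, strictly increasing, convex function Φ : [1,∞) → [1,∞) such that ∫₁^∞ log Φ(t) dt/t² = ∞, liminf_{t→∞} (log Φ(t))/(log t) = 1, and Φ(t) ≥ t for all t ≥ 1. In particular, for no λ > 1, Cλ > 0, Tλ ≥ 1 does Φ(t) ≥ Cλ t^λ hold for all t ≥ Tλ. -/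
open ENNReal MeasureTheory Set Filter Real
open scoped Topology Function

/-!
Take `Φ t = t + ∫₁ᵗ 2 exp (g s) ds` with `g` nondecreasing, so that `Φ` is convex. Along a tower
`Tₙ₊₁ = exp ((n + 1) (4 Tₙ + 2))`, `g` is the identity on `[Tₙ, 4 Tₙ]`, which forces `Φ t ≥ eᵗ` on
`[Tₙ + 1, 2 Tₙ + 2]`; each of these disjoint intervals contributes at least `1/2` to
`∫ log Φ / t²`. On `[4 Tₙ, Tₙ₊₁)` the exponent `g` stays frozen at `4 Tₙ`, so
`log Φ (Tₙ₊₁) ≤ log Tₙ₊₁ + 4 Tₙ + log 3 ≤ (1 + 1/(n+1)) log Tₙ₊₁`, which pushes the liminf down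
to `1`.
-/

theorem Monotone.intervalIntegral_le_mul {f : ℝ → ℝ} (hf : Monotone f) {x y : ℝ} (hxy : x ≤ y) :
    ∫ s in x..y, f s ≤ (y - x) * f y := by
  simpa using intervalIntegral.integral_mono_on hxy (hf.intervalIntegrable (μ := volume))
    intervalIntegrable_const fun s hs => hf hs.2

theorem Monotone.mul_le_intervalIntegral {f : ℝ → ℝ} (hf : Monotone f) {x y : ℝ} (hxy : x ≤ y) :
    (y - x) * f x ≤ ∫ s in x..y, f s := by
  simpa using intervalIntegral.integral_mono_on hxy intervalIntegrable_const
    (hf.intervalIntegrable (μ := volume)) fun s hs => hf hs.1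

theorem Monotone.convexOn_primitive {f : ℝ → ℝ} (hf : Monotone f) (a : ℝ) :
    ConvexOn ℝ univ fun t => ∫ s in a..t, f s := by
  refine convexOn_of_slope_mono_adjacent convex_univ fun {x y z} _ _ hxy hyz => ?_
  simp only [intervalIntegral.integral_interval_sub_left hf.intervalIntegrable
    hf.intervalIntegrable]
  calc (∫ s in x..y, f s) / (y - x) ≤ f y := by
        rw [div_le_iff₀ (sub_pos.2 hxy), mul_comm]; exact hf.intervalIntegral_le_mul hxy.le
    _ ≤ (∫ s in y..z, f s) / (z - y) := by
        rw [le_div_iff₀ (sub_pos.2 hyz), mul_comm]; exact hf.mul_le_intervalIntegral hyz.le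

theorem Filter.liminf_eq_of_eventually_ge_of_frequently_le {α : Type*} {l : Filter α}
    {u : α → ℝ} {a : ℝ} (hge : ∀ᶠ x in l, a ≤ u x) (hle : ∀ ε > 0, ∃ᶠ x in l, u x ≤ a + ε) :
    liminf u l = a := by
  have hbdd : IsBoundedUnder (· ≥ ·) l u := isBoundedUnder_of_eventually_ge hge
  refine le_antisymm (le_of_forall_pos_le_add fun ε hε => ?_) ?_
  · exact liminf_le_of_frequently_le (hle ε hε) hbdd
  · exact le_liminf_of_le (IsCoboundedUnder.of_frequently_le (hle 1 one_pos)) hge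

theorem eventually_lt_log_div_log_of_rpow_le {Φ : ℝ → ℝ} {C lam μ : ℝ} (hC : 0 < C)
    (hμ : μ < lam) (hΦ : ∀ᶠ t in atTop, C * t ^ lam ≤ Φ t) :
    ∀ᶠ t in atTop, μ < Real.log (Φ t) / Real.log t := by
  have hlim : Tendsto (fun t => lam + Real.log C / Real.log t) atTop (𝓝 lam) := by
    simpa using tendsto_const_nhds.add (tendsto_const_nhds.div_atTop tendsto_log_atTop)
  filter_upwards [hlim.eventually (lt_mem_nhds hμ), hΦ, eventually_gt_atTop 1]
    with t hμt hΦt ht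
  have hlogt : 0 < Real.log t := log_pos ht
  have hpow : 0 < C * t ^ lam := mul_pos hC (rpow_pos_of_pos (by linarith) lam)
  have hlogΦ : Real.log C + lam * Real.log t ≤ Real.log (Φ t) := by
    rw [← log_rpow (by linarith), ← log_mul hC.ne' (rpow_pos_of_pos (by linarith) lam).ne']
    exact log_le_log hpow hΦt
  calc μ < lam + Real.log C / Real.log t := hμt
    _ = (Real.log C + lam * Real.log t) / Real.log t := by field_simp; ring
    _ ≤ Real.log (Φ t) / Real.log t := div_le_div_of_nonneg_right hlogΦ hlogt.le

theorem ofReal_half_le_setLIntegral_log_div_sq {Φ : ℝ → ℝ} {a : ℝ} (ha : 0 < a)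
    (hΦ : ∀ t ∈ Ioc a (2 * a), t ≤ Real.log (Φ t)) :
    ENNReal.ofReal (1 / 2) ≤ ∫⁻ t in Ioc a (2 * a), ENNReal.ofReal (Real.log (Φ t) / t ^ 2) := by
  calc ENNReal.ofReal (1 / 2) = ∫⁻ _ in Ioc a (2 * a), ENNReal.ofReal (1 / (2 * a)) := by
        rw [setLIntegral_const, Real.volume_Ioc, ← ENNReal.ofReal_mul (by positivity)]
        congr 1; field_simp; ring
    _ ≤ ∫⁻ t in Ioc a (2 * a), ENNReal.ofReal (Real.log (Φ t) / t ^ 2) := by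
        refine setLIntegral_mono' measurableSet_Ioc fun t ht => ENNReal.ofReal_le_ofReal ?_
        have ht0 : 0 < t := ha.trans ht.1
        calc 1 / (2 * a) ≤ 1 / t := one_div_le_one_div_of_le ht0 ht.2
          _ = t / t ^ 2 := by field_simp
          _ ≤ Real.log (Φ t) / t ^ 2 := div_le_div_of_nonneg_right (hΦ t ht) (by positivity)

theorem setLIntegral_eq_top_of_pairwise_disjoint {α : Type*} [MeasurableSpace α] {μ : Measure α}
    {g : α → ℝ≥0∞} {S : Set α} {s : ℕ → Set α} {c : ℝ≥0∞} (hc : c ≠ 0)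
    (hs : ∀ n, MeasurableSet (s n)) (hd : Pairwise (Disjoint on s)) (hsS : ∀ n, s n ⊆ S)
    (hg : ∀ n, c ≤ ∫⁻ x in s n, g x ∂μ) : ∫⁻ x in S, g x ∂μ = ∞ := by
  refine top_le_iff.1 ?_
  calc ∞ = ∑' _ : ℕ, c := (ENNReal.tsum_const_eq_top_of_ne_zero hc).symm
    _ ≤ ∑' n, ∫⁻ x in s n, g x ∂μ := ENNReal.tsum_le_tsum hg
    _ = ∫⁻ x in ⋃ n, s n, g x ∂μ := (lintegral_iUnion hs hd g).symm
    _ ≤ ∫⁻ x in S, g x ∂μ := lintegral_mono_set (iUnion_subset hsS)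

namespace ConvexSlowGrowth

noncomputable def tower : ℕ → ℝ
  | 0 => 1
  | n + 1 => exp ((n + 1) * (4 * tower n + 2))

theorem log_tower_succ (n : ℕ) : Real.log (tower (n + 1)) = (n + 1) * (4 * tower n + 2) :=
  Real.log_exp _

theorem one_le_tower : ∀ n, 1 ≤ tower n
  | 0 => le_rfl
  | n + 1 => one_le_exp (by have := one_le_tower n; positivity)

theorem tower_succ_ge (n : ℕ) : 4 * tower n + 3 ≤ tower (n + 1) := by
  have hstep : (1 : ℝ) * (4 * tower n + 2) ≤ (n + 1) * (4 * tower n + 2) := by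
    have := one_le_tower n
    gcongr; linarith [n.cast_nonneg (α := ℝ)]
  have hexp : (n + 1) * (4 * tower n + 2) + 1 ≤ tower (n + 1) := add_one_le_exp _
  linarith

theorem strictMono_tower : StrictMono tower :=
  strictMono_nat_of_lt_succ fun n => by linarith [tower_succ_ge n, one_le_tower n]

theorem natCast_le_tower : ∀ n : ℕ, (n : ℝ) ≤ tower n
  | 0 => by simp [tower]
  | n + 1 => by push_cast; linarith [natCast_le_tower n, tower_succ_ge n, one_le_tower n]

theorem tendsto_tower_atTop : Tendsto tower atTop atTop :=
  tendsto_atTop_mono natCast_le_tower tendsto_natCast_atTop_atTop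

theorem exists_lt_tower_succ (s : ℝ) : ∃ n, s < tower (n + 1) :=
  ((tendsto_tower_atTop.comp (tendsto_add_atTop_nat 1)).eventually_gt_atTop s).exists

open Classical in
noncomputable def stage (s : ℝ) : ℕ := Nat.find (exists_lt_tower_succ s)

theorem stage_le {s : ℝ} {k : ℕ} (hs : s < tower (k + 1)) : stage s ≤ k := by
  classical exact Nat.find_le hs

theorem le_stage {s : ℝ} {n : ℕ} (hs : tower n ≤ s) : n ≤ stage s := by
  classical
  by_contra! h
  have : s < tower (stage s + 1) := Nat.find_spec (exists_lt_tower_succ s)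
  linarith [strictMono_tower.monotone (Nat.succ_le_of_lt h)]

theorem monotone_stage : Monotone stage := by
  classical
  exact fun s u hsu => stage_le (hsu.trans_lt (Nat.find_spec (exists_lt_tower_succ u)))

noncomputable def exponent (s : ℝ) : ℝ := min s (4 * tower (stage s))

theorem monotone_exponent : Monotone exponent := fun s u hsu =>
  min_le_min hsu (by gcongr; exact strictMono_tower.monotone (monotone_stage hsu))

theorem exponent_eq_self {n : ℕ} {s : ℝ} (h₁ : tower n ≤ s) (h₂ : s ≤ 4 * tower n) :
    exponent s = s :=
  min_eq_left (h₂.trans (by gcongr; exact strictMono_tower.monotone (le_stage h₁)))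

theorem exponent_le {k : ℕ} {s : ℝ} (hs : s < tower (k + 1)) : exponent s ≤ 4 * tower k :=
  (min_le_right _ _).trans (by gcongr; exact strictMono_tower.monotone (stage_le hs))

noncomputable def rate (s : ℝ) : ℝ := 2 * exp (exponent s)

theorem rate_pos (s : ℝ) : 0 < rate s := by
  unfold rate; positivity

theorem monotone_rate : Monotone rate := fun _ _ h => by
  unfold rate; gcongr; exact monotone_exponent h

noncomputable def Phi (t : ℝ) : ℝ := t + ∫ s in (1 : ℝ)..t, rate s

theorem Phi_sub (s t : ℝ) : Phi t - Phi s = t - s + ∫ u in s..t, rate u := by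
  have := intervalIntegral.integral_interval_sub_left (a := 1) (b := t) (c := s)
    (monotone_rate.intervalIntegrable (μ := volume)) monotone_rate.intervalIntegrable
  rw [Phi, Phi]
  linarith

theorem continuous_Phi : Continuous Phi :=
  continuous_id.add (intervalIntegral.continuous_primitive
    (fun _ _ => monotone_rate.intervalIntegrable) 1)

theorem strictMono_Phi : StrictMono Phi := fun s t hst => by
  have := intervalIntegral.integral_nonneg (μ := volume) hst.le fun u _ => (rate_pos u).le
  linarith [Phi_sub s t]

theorem convexOn_Phi : ConvexOn ℝ (Ici 1) Phi :=
  ((convexOn_id convex_univ).add (monotone_rate.convexOn_primitive 1)).subset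
    (subset_univ _) (convex_Ici 1)

theorem le_Phi {t : ℝ} (ht : 1 ≤ t) : t ≤ Phi t := by
  have := intervalIntegral.integral_nonneg (μ := volume) ht fun u _ => (rate_pos u).le
  unfold Phi; linarith

theorem exp_le_Phi {n : ℕ} {t : ℝ} (h₁ : tower n + 1 ≤ t) (h₂ : t ≤ 4 * tower n) :
    exp t ≤ Phi t := by
  set T := tower n
  have hT : 1 ≤ T := one_le_tower n
  have hgrowth : 2 * (exp t - exp T) ≤ ∫ u in T..t, rate u := by
    rw [← integral_exp, ← intervalIntegral.integral_const_mul]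
    refine intervalIntegral.integral_mono_on (by linarith)
      ((continuous_const.mul Real.continuous_exp).intervalIntegrable _ _)
      monotone_rate.intervalIntegrable fun u hu => ?_
    rw [rate, exponent_eq_self hu.1 (hu.2.trans h₂)]
  have hexpT : 2 * exp T ≤ exp t := by
    calc 2 * exp T ≤ exp 1 * exp T := by gcongr; linarith [add_one_le_exp (1 : ℝ)]
      _ = exp (T + 1) := by rw [exp_add, mul_comm]
      _ ≤ exp t := exp_le_exp.2 h₁
  linarith [Phi_sub T t, le_Phi hT]

theorem Phi_tower_succ_le (k : ℕ) :
    Phi (tower (k + 1)) ≤ 3 * exp (4 * tower k) * tower (k + 1) := by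
  set B := tower (k + 1)
  have hB : 1 ≤ B := one_le_tower _
  have hM : 1 ≤ exp (4 * tower k) := one_le_exp (by linarith [one_le_tower k])
  have hint : ∫ s in (1 : ℝ)..B, rate s ≤ (B - 1) * (2 * exp (4 * tower k)) := by
    simpa using intervalIntegral.integral_mono_on_of_le_Ioo (μ := volume) hB
      monotone_rate.intervalIntegrable intervalIntegrable_const
      fun s hs => by
        change 2 * exp (exponent s) ≤ 2 * exp (4 * tower k); gcongr; exact exponent_le hs.2
  calc Phi B ≤ B + (B - 1) * (2 * exp (4 * tower k)) := by unfold Phi; linarith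
    _ ≤ 3 * exp (4 * tower k) * B := by nlinarith

theorem log_Phi_tower_succ_le (k : ℕ) :
    Real.log (Phi (tower (k + 1))) ≤ (1 + 1 / (k + 1)) * Real.log (tower (k + 1)) := by
  have hT := one_le_tower k
  have hlog3 : Real.log 3 ≤ 2 := by
    linarith [Real.log_le_sub_one_of_pos (by norm_num : (0 : ℝ) < 3)]
  calc Real.log (Phi (tower (k + 1)))
      ≤ Real.log (3 * exp (4 * tower k) * tower (k + 1)) :=
        log_le_log (by linarith [le_Phi (one_le_tower (k + 1)), one_le_tower (k + 1)])
          (Phi_tower_succ_le k)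
    _ = Real.log 3 + 4 * tower k + Real.log (tower (k + 1)) := by
        rw [log_mul (by positivity) (by linarith [one_le_tower (k + 1)]), log_mul (by norm_num)
          (exp_pos _).ne', log_exp]
    _ ≤ (1 + 1 / (k + 1)) * Real.log (tower (k + 1)) := by
        rw [log_tower_succ]; field_simp; nlinarith

theorem eventually_one_le_log_Phi_div_log :
    ∀ᶠ t in atTop, 1 ≤ Real.log (Phi t) / Real.log t := by
  filter_upwards [eventually_gt_atTop 1] with t ht
  rw [le_div_iff₀ (log_pos ht), one_mul]
  exact log_le_log (by linarith) (le_Phi ht.le)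

theorem frequently_log_Phi_div_log_le {ε : ℝ} (hε : 0 < ε) :
    ∃ᶠ t in atTop, Real.log (Phi t) / Real.log t ≤ 1 + ε := by
  have hk : ∀ᶠ k : ℕ in atTop, 1 / ((k : ℝ) + 1) < ε :=
    tendsto_one_div_add_atTop_nhds_zero_nat.eventually (gt_mem_nhds hε)
  refine (tendsto_tower_atTop.comp (tendsto_add_atTop_nat 1)).frequently
    (hk.mono fun k hk => ?_).frequently
  have hlog : 0 < Real.log (tower (k + 1)) := by
    rw [log_tower_succ]; have := one_le_tower k; positivity
  rw [Function.comp_apply, div_le_iff₀ hlog]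
  calc _ ≤ (1 + 1 / (k + 1)) * Real.log (tower (k + 1)) := log_Phi_tower_succ_le k
    _ ≤ (1 + ε) * Real.log (tower (k + 1)) := by gcongr

theorem lintegral_log_Phi_div_sq_eq_top :
    ∫⁻ t in Ioi 1, ENNReal.ofReal (Real.log (Phi t) / t ^ 2) = ∞ := by
  set a : ℕ → ℝ := fun n => tower n + 1
  have ha : ∀ n, 2 * a n ≤ a (n + 1) := fun n => by
    simp only [a]; linarith [tower_succ_ge n, one_le_tower n]
  have ha_mono : Monotone a := fun m n h => by
    simp only [a]; linarith [strictMono_tower.monotone h]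
  refine setLIntegral_eq_top_of_pairwise_disjoint (s := fun n => Ioc (a n) (2 * a n))
    (by norm_num : ENNReal.ofReal (1 / 2) ≠ 0) (fun _ => measurableSet_Ioc)
    (ha_mono.pairwise_disjoint_on_Ioc_succ.mono fun m n h =>
      h.mono (Ioc_subset_Ioc_right (ha m)) (Ioc_subset_Ioc_right (ha n)))
    (fun n => Ioc_subset_Ioi_self.trans (Ioi_subset_Ioi (by linarith [one_le_tower n])))
    fun n => ofReal_half_le_setLIntegral_log_div_sq (by linarith [one_le_tower n])
      fun t ht => ?_
  have hT := one_le_tower n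
  have ht₁ : tower n + 1 ≤ t := ht.1.le
  have ht₂ : t ≤ 4 * tower n := by linarith [ht.2]
  rw [le_log_iff_exp_le (by linarith [le_Phi (by linarith : 1 ≤ t)])]
  exact exp_le_Phi ht₁ ht₂

end ConvexSlowGrowth

/-- There exists a continuous, strictly increasing, convex function
`Φ : [1,∞) → [1,∞)` such that `∫₁^∞ log Φ(t) dt/t² = ∞`,
`liminf_{t→∞} (log Φ(t))/(log t) = 1`, and `Φ(t) ≥ t` for all `t ≥ 1`.
In particular, for no `λ > 1`, `C > 0`, `T ≥ 1` does `Φ(t) ≥ C t^λ` hold for all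
`t ≥ T`. -/
theorem stmt15 :
    ∃ Φ : ℝ → ℝ,
      ContinuousOn Φ (Ici 1) ∧
      StrictMonoOn Φ (Ici 1) ∧
      ConvexOn ℝ (Ici 1) Φ ∧
      (∀ t ≥ (1:ℝ), 1 ≤ Φ t) ∧
      (∀ t ≥ (1:ℝ), t ≤ Φ t) ∧
      (∫⁻ t in Ioi (1:ℝ), ENNReal.ofReal (Real.log (Φ t) / t ^ 2) = ∞) ∧
      Filter.liminf (fun t => Real.log (Φ t) / Real.log t) atTop = 1 ∧
      ¬ ∃ lam : ℝ, 1 < lam ∧ ∃ C : ℝ, 0 < C ∧ ∃ T : ℝ, 1 ≤ T ∧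
          ∀ t ≥ T, C * t ^ lam ≤ Φ t := by
  open ConvexSlowGrowth in
  · refine ⟨Phi, continuous_Phi.continuousOn, strictMono_Phi.strictMonoOn _, convexOn_Phi,
      fun t ht => ht.trans (le_Phi ht), fun t ht => le_Phi ht, lintegral_log_Phi_div_sq_eq_top,
      liminf_eq_of_eventually_ge_of_frequently_le eventually_one_le_log_Phi_div_log
        fun ε hε => frequently_log_Phi_div_log_le hε, ?_⟩
    rintro ⟨lam, hlam, C, hC, T, -, hT⟩
    obtain ⟨t, hle, hlt⟩ := ((frequently_log_Phi_div_log_le (ε := (lam - 1) / 2)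
      (by linarith)).and_eventually (eventually_lt_log_div_log_of_rpow_le hC
        (μ := 1 + (lam - 1) / 2) (by linarith) (eventually_atTop.2 ⟨T, hT⟩))).exists
    linarith
end
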